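/- arXiv:2007.05844 — 2 statements merged into one kernel-verified Lean document; each statement's English description precedes it below -/
import Mathlib

section
/- Assuming the Continuum Hypothesis, there exists a Luzin mad family 𝒜 such that Ψ(𝒜) is quasi-normal. -/
/-!
Under CH, enumerate `𝒫(ℕ)` as `⟨W ξ : ξ < ω₁⟩` and build `⟨a_α : α < ω₁⟩` recursively: the
columns of `ℕ ≃ ℕ × ℕ` for `α < ω`, and then an `a_α` that is almost disjoint from every earlier
`a_β`, meets all but finitely many of them above any given `n`, and meets `W ξ` infinitely for
every `ξ < α` such that `W ξ` is not almost covered by finitely many `a_β`, `β < α`.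
Then for every `V ⊆ ℕ` the members `a` with `a ∩ V` infinite form a finite set (if `V` is almost
covered by finitely many members) or a co-countable one (otherwise they include a tail of the
enumeration); in particular the family is mad.

In `Ψ(𝒜)` a point `a ∈ 𝒜` lies in a regular closed set `C` iff `a` meets `C ∩ ℕ` infinitely,
so the trace on `𝒜` of a π-closed set is again finite or co-countable. Two disjoint π-closed sets
cannot both have co-countable traces since `𝒜` is uncountable, and two disjoint closed sets one
of which contains only finitely many points of `𝒜` are always separated.
-/

open Set

namespace PsiSpace

/-- An (infinite) almost disjoint family of infinite subsets of ℕ. -/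
def AlmostDisjoint (𝒜 : Set (Set ℕ)) : Prop :=
  𝒜.Infinite ∧ (∀ a ∈ 𝒜, a.Infinite) ∧
    ∀ a ∈ 𝒜, ∀ b ∈ 𝒜, a ≠ b → (a ∩ b).Finite

/-- A maximal almost disjoint family. -/
def MadFamily (𝒜 : Set (Set ℕ)) : Prop :=
  AlmostDisjoint 𝒜 ∧ ∀ X : Set ℕ, X.Infinite → ∃ a ∈ 𝒜, (a ∩ X).Infinite

/-- 𝒜↾B = {a ∈ 𝒜 : a ∩ B infinite}. -/
def ADRestrict (𝒜 : Set (Set ℕ)) (B : Set ℕ) : Set (Set ℕ) :=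
  {a | a ∈ 𝒜 ∧ (a ∩ B).Infinite}

/-- 𝒜 has true cardinality 𝔠. -/
def TrueCardContinuum (𝒜 : Set (Set ℕ)) : Prop :=
  ∀ B : Set ℕ, (ADRestrict 𝒜 B).Finite ∨ Cardinal.mk ↥(ADRestrict 𝒜 B) = Cardinal.continuum

/-- The underlying set of the Mrówka–Isbell space Ψ(𝒜): ℕ together with the members of 𝒜. -/
def Psi (𝒜 : Set (Set ℕ)) : Type := ℕ ⊕ {a : Set ℕ // a ∈ 𝒜}

/-- The isolated point of Ψ(𝒜) corresponding to n ∈ ℕ. -/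
def Psi.nat {𝒜 : Set (Set ℕ)} (n : ℕ) : Psi 𝒜 := Sum.inl n

/-- The point of Ψ(𝒜) corresponding to a ∈ 𝒜. -/
def Psi.pt {𝒜 : Set (Set ℕ)} (a : {a : Set ℕ // a ∈ 𝒜}) : Psi 𝒜 := Sum.inr a

/-- The Mrówka–Isbell topology: each n ∈ ℕ is isolated, and basic neighbourhoods of a ∈ 𝒜
are {a} ∪ (a \ F) for F finite. Equivalently, U is open iff for every a ∈ 𝒜 with a ∈ U,
all but finitely many elements of a belong to U. -/
instance psiTop (𝒜 : Set (Set ℕ)) : TopologicalSpace (Psi 𝒜) where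
  IsOpen U := ∀ a : {a : Set ℕ // a ∈ 𝒜}, Psi.pt a ∈ U →
    {n : ℕ | n ∈ a.1 ∧ Psi.nat n ∉ U}.Finite
  isOpen_univ := fun a _ => by
    convert Set.finite_empty using 1
    ext n
    simp [Set.mem_univ]
  isOpen_inter := fun U V hU hV a ha => by
    refine ((hU a ha.1).union (hV a ha.2)).subset ?_
    rintro n ⟨hn, hnUV⟩
    by_cases h : Psi.nat n ∈ U
    · exact Or.inr ⟨hn, fun h' => hnUV ⟨h, h'⟩⟩
    · exact Or.inl ⟨hn, h⟩
  isOpen_sUnion := fun S hS a ha => by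
    obtain ⟨U, hUS, haU⟩ := ha
    exact (hS U hUS a haU).subset fun n hn => ⟨hn.1, fun h => hn.2 ⟨U, hUS, h⟩⟩

/-- The copy of a set W ⊆ ℕ inside Ψ(𝒜). -/
def PsiNat (𝒜 : Set (Set ℕ)) (W : Set ℕ) : Set (Psi 𝒜) := {x | ∃ n ∈ W, x = Psi.nat n}

/-- The copy of a subfamily 𝒞 ⊆ 𝒜 inside Ψ(𝒜). -/
def PsiSub (𝒜 𝒞 : Set (Set ℕ)) : Set (Psi 𝒜) :=
  {x | ∃ a : {a : Set ℕ // a ∈ 𝒜}, a.1 ∈ 𝒞 ∧ x = Psi.pt a}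

/-- A and B are separated by disjoint open sets. -/
def SepOpen {X : Type*} [TopologicalSpace X] (A B : Set X) : Prop :=
  ∃ U V : Set X, IsOpen U ∧ IsOpen V ∧ A ⊆ U ∧ B ⊆ V ∧ Disjoint U V

/-- Regular closed (closed domain): A is the closure of its interior. -/
def RegClosed {X : Type*} [TopologicalSpace X] (A : Set X) : Prop :=
  closure (interior A) = A

/-- π-closed: a finite intersection of regular closed sets. -/
def PiClosed {X : Type*} [TopologicalSpace X] (A : Set X) : Prop :=
  ∃ S : Finset (Set X), (∀ B ∈ S, RegClosed B) ∧ A = ⋂₀ ↑S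

/-- A is an intersection of at most n regular closed sets. -/
def InterOfAtMost {X : Type*} [TopologicalSpace X] (n : ℕ) (A : Set X) : Prop :=
  ∃ S : Finset (Set X), S.card ≤ n ∧ (∀ B ∈ S, RegClosed B) ∧ A = ⋂₀ ↑S

/-- Almost-normal: disjoint closed + regular closed sets are separated. -/
def AlmostNormal (X : Type*) [TopologicalSpace X] : Prop :=
  ∀ A B : Set X, IsClosed A → RegClosed B → Disjoint A B → SepOpen A B

/-- π-normal: disjoint closed + π-closed sets are separated. -/
def PiNormal (X : Type*) [TopologicalSpace X] : Prop :=
  ∀ A B : Set X, IsClosed A → PiClosed B → Disjoint A B → SepOpen A B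

/-- Quasi-normal: disjoint π-closed sets are separated. -/
def QuasiNormal (X : Type*) [TopologicalSpace X] : Prop :=
  ∀ A B : Set X, PiClosed A → PiClosed B → Disjoint A B → SepOpen A B

/-- Mildly-normal: disjoint regular closed sets are separated. -/
def MildlyNormal (X : Type*) [TopologicalSpace X] : Prop :=
  ∀ A B : Set X, RegClosed A → RegClosed B → Disjoint A B → SepOpen A B

/-- Partly-normal: disjoint regular closed + π-closed sets are separated. -/
def PartlyNormal (X : Type*) [TopologicalSpace X] : Prop :=
  ∀ A B : Set X, RegClosed A → PiClosed B → Disjoint A B → SepOpen A B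

/-- n-partly-normal: disjoint regular closed + (intersection of at most n regular closed)
sets are separated. -/
def NPartlyNormal (n : ℕ) (X : Type*) [TopologicalSpace X] : Prop :=
  ∀ A B : Set X, RegClosed A → InterOfAtMost n B → Disjoint A B → SepOpen A B

/-- 𝓘⁺(𝒜): the sets B ⊆ ℕ with 𝒜↾B infinite. -/
def IPlus (𝒜 : Set (Set ℕ)) : Set (Set ℕ) := {B | (ADRestrict 𝒜 B).Infinite}

/-- Completely separable almost disjoint family. -/
def CompletelySeparable (𝒜 : Set (Set ℕ)) : Prop :=
  ∀ B ∈ IPlus 𝒜, ∃ a ∈ 𝒜, a ⊆ B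

/-- A Luzin family: it can be enumerated as ⟨a_α : α < ω₁⟩ so that for each α < ω₁ and
n ∈ ℕ, the set {β < α : a_α ∩ a_β ⊆ n} is finite. -/
def LuzinFamily (𝒜 : Set (Set ℕ)) : Prop :=
  ∃ a : Ordinal.{0} → Set ℕ,
    (∀ α, α < (Cardinal.aleph 1).ord → a α ∈ 𝒜) ∧
    (∀ x ∈ 𝒜, ∃ α, α < (Cardinal.aleph 1).ord ∧ a α = x) ∧
    (∀ α, α < (Cardinal.aleph 1).ord → ∀ β, β < (Cardinal.aleph 1).ord → α ≠ β → a α ≠ a β) ∧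
    ∀ α, α < (Cardinal.aleph 1).ord → ∀ n : ℕ,
      {β : Ordinal.{0} | β < α ∧ a α ∩ a β ⊆ Set.Iio n}.Finite

/-- Strongly ℵ₀-separated almost disjoint family. -/
def StronglyAleph0Separated (𝒜 : Set (Set ℕ)) : Prop :=
  ∀ A B : Set (Set ℕ), A ⊆ 𝒜 → B ⊆ 𝒜 → A.Countable → A.Infinite →
    B.Countable → B.Infinite → Disjoint A B →
    ∃ X : Set ℕ,
      (∀ a ∈ 𝒜, (a \ X).Finite ∨ (a ∩ X).Finite) ∧
      (∀ a ∈ A, (a \ X).Finite) ∧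
      (∀ a ∈ B, (a ∩ X).Finite)

theorem exists_strictMono_forall_mem {α : Type*} [LinearOrder α] [LocallyFiniteOrderBot α]
    {S : ℕ → Set α} (hS : ∀ k, (S k).Infinite) : ∃ f : ℕ → α, StrictMono f ∧ ∀ k, f k ∈ S k := by
  choose g hg_mem hg_gt using fun k x => (hS k).exists_gt x
  refine ⟨fun k => Nat.rec (hS 0).nonempty.some (fun k x => g (k + 1) x) k,
    strictMono_nat_of_lt_succ fun k => hg_gt _ _, ?_⟩
  rintro (_ | k)
  exacts [(hS 0).nonempty.some_mem, hg_mem _ _]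

theorem finite_or_countable_compl_biInter {α ι : Type*} {t : Set ι} (ht : t.Finite)
    {s : ι → Set α} (hs : ∀ i ∈ t, (s i).Finite ∨ (s i)ᶜ.Countable) :
    (⋂ i ∈ t, s i).Finite ∨ (⋂ i ∈ t, s i)ᶜ.Countable := by
  by_cases h : ∃ i ∈ t, (s i).Finite
  · obtain ⟨i, hi, hfin⟩ := h
    exact .inl (hfin.subset (biInter_subset_of_mem hi))
  · push Not at h
    rw [compl_iInter₂]
    exact .inr (ht.countable.biUnion fun i hi => (hs i hi).resolve_left (h i hi))

section AlmostCovered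

variable {α : Type*}

def NotAlmostCovered (ℬ : Set (Set α)) (V : Set α) : Prop :=
  ∀ s : Finset (Set α), ↑s ⊆ ℬ → (V \ ⋃₀ ↑s).Infinite

theorem NotAlmostCovered.mono {ℬ ℬ' : Set (Set α)} {V : Set α} (h : NotAlmostCovered ℬ V)
    (hℬ : ℬ' ⊆ ℬ) : NotAlmostCovered ℬ' V :=
  fun s hs => h s (hs.trans hℬ)

theorem NotAlmostCovered.infinite_diff_biUnion {ι : Type*} {b : ι → Set α} {V : Set α}
    (h : NotAlmostCovered (range b) V) {t : Set ι} (ht : t.Finite) :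
    (V \ ⋃ i ∈ t, b i).Infinite := by
  classical
  simpa using h (ht.toFinset.image b) (by simp)

theorem notAlmostCovered_of_forall_finite_inter {ℬ : Set (Set α)} {V : Set α} (hV : V.Infinite)
    (h : ∀ a ∈ ℬ, (a ∩ V).Finite) : NotAlmostCovered ℬ V := by
  intro s hs
  have hfin : (V ∩ ⋃₀ ↑s).Finite := by
    refine (s.finite_toSet.biUnion fun a ha => h a (hs ha)).subset ?_
    rintro x ⟨hxV, a, ha, hxa⟩
    exact mem_biUnion ha ⟨hxa, hxV⟩
  simpa only [sdiff_self_inter] using hV.sdiff hfin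

theorem finite_inter_of_finite_diff_sUnion {ℬ : Set (Set α)}
    (hℬ : ∀ a ∈ ℬ, ∀ b ∈ ℬ, a ≠ b → (a ∩ b).Finite) {s : Finset (Set α)} (hs : ↑s ⊆ ℬ)
    {V : Set α} (hV : (V \ ⋃₀ ↑s).Finite) {a : Set α} (ha : a ∈ ℬ) (has : a ∉ s) :
    (a ∩ V).Finite := by
  refine (hV.union (s.finite_toSet.biUnion fun b hb => hℬ a ha b (hs hb) ?_)).subset ?_
  · rintro rfl; exact has hb
  · rintro x ⟨hxa, hxV⟩
    by_cases hx : x ∈ ⋃₀ (↑s : Set (Set α))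
    · obtain ⟨b, hb, hxb⟩ := hx
      exact .inr (mem_biUnion hb ⟨hxa, hxb⟩)
    · exact .inl ⟨hxV, hx⟩

end AlmostCovered

structure IsLuzinExtension {ι : Type*} (b X : ι → Set ℕ) (a : Set ℕ) : Prop where
  infinite : a.Infinite
  finite_inter : ∀ i, (a ∩ b i).Finite
  finite_setOf_inter_subset : ∀ n, {i | a ∩ b i ⊆ Iio n}.Finite
  infinite_inter : ∀ i, NotAlmostCovered (range b) (X i) → (a ∩ X i).Infinite

theorem exists_isLuzinExtension_nat {b : ℕ → Set ℕ} (hb : ∀ k, (b k).Infinite)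
    (hb_ad : Pairwise fun j k => (b j ∩ b k).Finite) (X : ℕ → Set ℕ) :
    ∃ a, IsLuzinExtension b X a := by
  classical
  -- `a = range f` with `f k ∈ T k` avoiding every `b j`, `j < k / 2`. Slot `2 * k` puts a point
  -- of `b k` above `2 * k` into `a` (the Luzin condition); slot `2 * Nat.pair i m + 1` puts an
  -- `m`-th point of `X i` into `a` when `X i` is not almost covered.
  let T : ℕ → Set ℕ := fun k =>
    if Odd k ∧ NotAlmostCovered (range b) (X (k / 2).unpair.1) then X (k / 2).unpair.1
    else b (k / 2)
  have hT : ∀ k, (T k \ ⋃ j ∈ Iio (k / 2), b j).Infinite := by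
    intro k
    dsimp only [T]
    split_ifs with h
    · exact h.2.infinite_diff_biUnion (finite_Iio _)
    · refine ((hb (k / 2)).sdiff ((finite_Iio (k / 2)).biUnion
        fun j (hj : j < k / 2) => hb_ad (ne_of_lt hj))).mono ?_
      rintro x ⟨hxk, hx⟩
      refine ⟨hxk, fun h => hx ?_⟩
      simp only [mem_iUnion] at h ⊢
      obtain ⟨j, hj, hxj⟩ := h
      exact ⟨j, hj, hxj, hxk⟩
  obtain ⟨f, hf_mono, hf_mem⟩ := exists_strictMono_forall_mem hT
  refine ⟨range f, infinite_range_of_injective hf_mono.injective, fun j => ?_, fun n => ?_,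
    fun i hi => ?_⟩
  · refine ((finite_Iio (2 * j + 2)).image f).subset ?_
    rintro _ ⟨⟨k, rfl⟩, hk⟩
    refine ⟨k, ?_, rfl⟩
    by_contra hjk
    exact (hf_mem k).2 (mem_biUnion (show j < k / 2 by simp only [mem_Iio] at hjk; omega) hk)
  · refine (finite_Iio n).subset fun j hj => ?_
    have h2j : f (2 * j) ∈ b j := by
      simpa [T, Nat.not_odd_iff_even.2 (even_two_mul j)] using (hf_mem (2 * j)).1
    calc j ≤ 2 * j := by omega
      _ ≤ f (2 * j) := hf_mono.le_apply
      _ < n := hj ⟨mem_range_self _, h2j⟩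
  · have hmem : ∀ m, f (2 * Nat.pair i m + 1) ∈ X i := fun m => by
      have hk : (2 * Nat.pair i m + 1) / 2 = Nat.pair i m := by omega
      have h := (hf_mem (2 * Nat.pair i m + 1)).1
      dsimp only [T] at h
      rwa [hk, Nat.unpair_pair, if_pos ⟨odd_two_mul_add_one _, hi⟩] at h
    refine infinite_of_injective_forall_mem (fun m m' h => ?_) fun m => ⟨mem_range_self _, hmem m⟩
    have := hf_mono.injective h
    exact (Nat.pair_eq_pair.1 (by omega : Nat.pair i m = Nat.pair i m')).2

theorem IsLuzinExtension.of_comp_equiv {ι κ : Type*} {b X : ι → Set ℕ} {a : Set ℕ} (e : κ ≃ ι)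
    (h : IsLuzinExtension (b ∘ e) (X ∘ e) a) : IsLuzinExtension b X a where
  infinite := h.infinite
  finite_inter i := by simpa using h.finite_inter (e.symm i)
  finite_setOf_inter_subset n :=
    (show (e ⁻¹' {i | a ∩ b i ⊆ Iio n}).Finite from h.finite_setOf_inter_subset n).of_preimage
      e.surjective
  infinite_inter i hi := by
    simpa using h.infinite_inter (e.symm i) (by simpa [e.surjective.range_comp] using hi)

theorem exists_isLuzinExtension {ι : Type*} [Countable ι] [Infinite ι] {b : ι → Set ℕ}
    (hb : ∀ i, (b i).Infinite) (hb_ad : Pairwise fun i j => (b i ∩ b j).Finite) (X : ι → Set ℕ) :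
    ∃ a, IsLuzinExtension b X a := by
  obtain ⟨e⟩ := nonempty_equiv_of_countable (α := ℕ) (β := ι)
  obtain ⟨a, ha⟩ := exists_isLuzinExtension_nat (fun k => hb (e k))
    (hb_ad.comp_of_injective e.injective) (X ∘ e)
  exact ⟨a, ha.of_comp_equiv e⟩

section Ordinal

open Ordinal Cardinal

theorem countable_Iio_of_lt_omega_one {α : Ordinal} (hα : α < ω₁) : (Iio α).Countable := by
  rw [← le_aleph0_iff_set_countable, Cardinal.mk_Iio_ordinal, lift_le_aleph0, ← lt_aleph_one_iff,
    ← lt_ord, ord_aleph]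
  exact hα

theorem not_countable_Iio_omega_one : ¬ (Iio ω₁).Countable := by
  rw [← le_aleph0_iff_set_countable, Cardinal.mk_Iio_ordinal, lift_le_aleph0, card_omega, not_le]
  exact aleph0_lt_aleph_one

theorem infinite_Iio_of_omega0_le {α : Ordinal} (hα : ω ≤ α) : (Iio α).Infinite :=
  infinite_of_injective_forall_mem Nat.cast_injective fun n => (natCast_lt_omega0 n).trans_le hα

theorem finite_Iio_of_lt_omega0 {α : Ordinal} (hα : α < ω) : (Iio α).Finite := by
  obtain ⟨n, rfl⟩ := lt_omega0.1 hα
  refine ((finite_Iio n).image ((↑) : ℕ → Ordinal)).subset fun β hβ => ?_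
  obtain ⟨m, rfl⟩ := lt_omega0.1 (lt_trans hβ hα)
  exact ⟨m, by simpa using hβ, rfl⟩

theorem exists_surjOn_Iio_omega_one (hCH : 𝔠 = ℵ₁) :
    ∃ W : Ordinal.{0} → Set ℕ, SurjOn W (Iio ω₁) univ := by
  have hCH₀ : Cardinal.continuum.{0} = ℵ₁ := by
    rw [← Cardinal.lift_inj]
    simpa using hCH
  obtain ⟨g⟩ : Nonempty (Set ℕ ↪ Iio (ω₁ : Ordinal.{0})) := by
    refine lift_mk_le'.1 ?_
    simp [hCH₀, Cardinal.mk_Iio_ordinal, card_omega]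
  exact ⟨Function.invFun fun V => (g V : Ordinal), fun V _ => ⟨g V, (g V).2,
    Function.leftInverse_invFun (Subtype.val_injective.comp g.injective) V⟩⟩

end Ordinal

def column (n : ℕ) : Set ℕ := range (Nat.pair n)

theorem column_infinite (n : ℕ) : (column n).Infinite :=
  infinite_range_of_injective fun _ _ h => (Nat.pair_eq_pair.1 h).2

theorem disjoint_column {m n : ℕ} (h : m ≠ n) : Disjoint (column m) (column n) := by
  rw [disjoint_left]
  rintro _ ⟨i, rfl⟩ ⟨j, hj⟩
  exact h (Nat.pair_eq_pair.1 hj).1.symm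

section LuzinSeq

open Ordinal Cardinal

-- The junk value `∅` is never reached below `ω₁` (`isLuzinExtension_luzinSeq`).
open Classical in
noncomputable def luzinSeq (W : Ordinal.{0} → Set ℕ) : Ordinal.{0} → Set ℕ :=
  Ordinal.lt_wf.fix fun α A =>
    if α < ω then column (toNat α.card)
    else if h : ∃ a, IsLuzinExtension (fun β : Iio α => A β β.2) ((Iio α).domRestrict W) a
      then h.choose else ∅

variable (W : Ordinal.{0} → Set ℕ)

open Classical in
theorem luzinSeq_eq (α : Ordinal) : luzinSeq W α =
    if α < ω then column (toNat α.card)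
    else if h : ∃ a, IsLuzinExtension ((Iio α).domRestrict (luzinSeq W)) ((Iio α).domRestrict W) a
      then h.choose else ∅ :=
  WellFounded.fix_eq _ _ _

theorem luzinSeq_natCast (n : ℕ) : luzinSeq W n = column n := by
  rw [luzinSeq_eq, if_pos (natCast_lt_omega0 n), card_nat, toNat_natCast]

theorem isLuzinExtension_luzinSeq_of_exists {α : Ordinal} (hα : ω ≤ α)
    (h : ∃ a, IsLuzinExtension ((Iio α).domRestrict (luzinSeq W)) ((Iio α).domRestrict W) a) :
    IsLuzinExtension ((Iio α).domRestrict (luzinSeq W)) ((Iio α).domRestrict W) (luzinSeq W α) := by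
  rw [luzinSeq_eq, if_neg hα.not_gt, dif_pos h]
  exact h.choose_spec

theorem exists_isLuzinExtension_restrict_luzinSeq {α : Ordinal} (hω : ω ≤ α) (hα : α < ω₁)
    (ih : ∀ β < α, (luzinSeq W β).Infinite ∧ ∀ γ < β, (luzinSeq W β ∩ luzinSeq W γ).Finite) :
    ∃ a, IsLuzinExtension ((Iio α).domRestrict (luzinSeq W)) ((Iio α).domRestrict W) a := by
  have := (countable_Iio_of_lt_omega_one hα).to_subtype
  have := (infinite_Iio_of_omega0_le hω).to_subtype
  refine exists_isLuzinExtension (fun β => (ih β.1 β.2).1) (fun (β γ : Iio α) hne => ?_) _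
  rcases lt_or_gt_of_ne (Subtype.coe_ne_coe.2 hne) with h | h
  · exact inter_comm (luzinSeq W γ) _ ▸ (ih γ.1 γ.2).2 β h
  · exact (ih β.1 β.2).2 γ h

theorem luzinSeq_infinite_and_finite_inter {α : Ordinal} (hα : α < ω₁) :
    (luzinSeq W α).Infinite ∧ ∀ β < α, (luzinSeq W α ∩ luzinSeq W β).Finite := by
  induction α using WellFoundedLT.induction with
  | _ α ih =>
  rcases lt_or_ge α ω with hω | hω
  · obtain ⟨n, rfl⟩ := lt_omega0.1 hω
    refine ⟨luzinSeq_natCast W n ▸ column_infinite n, fun β hβ => ?_⟩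
    obtain ⟨m, rfl⟩ := lt_omega0.1 (hβ.trans hω)
    rw [luzinSeq_natCast, luzinSeq_natCast,
      (disjoint_column (by exact_mod_cast hβ.ne')).inter_eq]
    exact finite_empty
  · have h := isLuzinExtension_luzinSeq_of_exists W hω
      (exists_isLuzinExtension_restrict_luzinSeq W hω hα fun β hβ => ih β hβ (hβ.trans hα))
    exact ⟨h.infinite, fun β hβ => h.finite_inter ⟨β, hβ⟩⟩

theorem isLuzinExtension_luzinSeq {α : Ordinal} (hω : ω ≤ α) (hα : α < ω₁) :
    IsLuzinExtension ((Iio α).domRestrict (luzinSeq W)) ((Iio α).domRestrict W) (luzinSeq W α) :=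
  isLuzinExtension_luzinSeq_of_exists W hω <| exists_isLuzinExtension_restrict_luzinSeq W hω hα
    fun _ hβ => luzinSeq_infinite_and_finite_inter W (hβ.trans hα)

theorem luzinSeq_injOn : InjOn (luzinSeq W) (Iio ω₁) := by
  intro α hα β hβ hαβ
  by_contra hne
  wlog hβα : β < α generalizing α β
  · exact this hβ hα hαβ.symm (Ne.symm hne) (lt_of_le_of_ne (not_lt.1 hβα) hne)
  have h := luzinSeq_infinite_and_finite_inter W hα
  exact h.1 (inter_self (luzinSeq W α) ▸ hαβ ▸ h.2 β hβα)

theorem finite_inter_of_mem_image_luzinSeq : ∀ a ∈ luzinSeq W '' Iio ω₁,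
    ∀ b ∈ luzinSeq W '' Iio ω₁, a ≠ b → (a ∩ b).Finite := by
  rintro _ ⟨α, hα, rfl⟩ _ ⟨β, hβ, rfl⟩ hne
  rcases lt_trichotomy α β with h | rfl | h
  · exact inter_comm (luzinSeq W β) _ ▸ (luzinSeq_infinite_and_finite_inter W hβ).2 α h
  · exact absurd rfl hne
  · exact (luzinSeq_infinite_and_finite_inter W hα).2 β h

theorem not_countable_image_luzinSeq : ¬ (luzinSeq W '' Iio ω₁).Countable := fun h =>
  not_countable_Iio_omega_one ((mapsTo_image _ _).countable_of_injOn (luzinSeq_injOn W) h)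

theorem luzinFamily_image_luzinSeq : LuzinFamily (luzinSeq W '' Iio ω₁) := by
  refine ⟨luzinSeq W, ?_, ?_, ?_, ?_⟩ <;> simp only [ord_aleph]
  · exact fun α hα => mem_image_of_mem _ hα
  · rintro _ ⟨α, hα, rfl⟩
    exact ⟨α, hα, rfl⟩
  · exact fun α hα β hβ hne => (luzinSeq_injOn W).ne hα hβ hne
  · intro α hα n
    rcases lt_or_ge α ω with hω | hω
    · exact (finite_Iio_of_lt_omega0 hω).subset fun β hβ => hβ.1
    · refine ((isLuzinExtension_luzinSeq W hω hα).finite_setOf_inter_subset n |>.image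
        Subtype.val).subset ?_
      rintro β ⟨hβα, hβ⟩
      exact ⟨⟨β, hβα⟩, hβ, rfl⟩

theorem almostDisjoint_image_luzinSeq : AlmostDisjoint (luzinSeq W '' Iio ω₁) :=
  ⟨fun h => not_countable_image_luzinSeq W h.countable,
    fun _ ⟨_, hα, ha⟩ => ha ▸ (luzinSeq_infinite_and_finite_inter W hα).1,
    finite_inter_of_mem_image_luzinSeq W⟩

variable {W}

theorem exists_forall_le_infinite_inter_luzinSeq (hW : SurjOn W (Iio ω₁) univ) {V : Set ℕ}
    (hV : NotAlmostCovered (luzinSeq W '' Iio ω₁) V) :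
    ∃ γ < ω₁, ∀ α < ω₁, γ ≤ α → (luzinSeq W α ∩ V).Infinite := by
  obtain ⟨ξ, hξ, rfl⟩ := hW (mem_univ V)
  refine ⟨max ω (Order.succ ξ), max_lt omega0_lt_omega_one ((isSuccLimit_omega 1).succ_lt hξ),
    fun α hα hγα => ?_⟩
  have hξα : ξ < α := Order.succ_le_iff.1 ((le_max_right _ _).trans hγα)
  refine (isLuzinExtension_luzinSeq W ((le_max_left _ _).trans hγα) hα).infinite_inter ⟨ξ, hξα⟩
    (hV.mono ?_)
  rintro _ ⟨β, rfl⟩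
  exact mem_image_of_mem _ (β.2.trans hα)

theorem madFamily_image_luzinSeq (hW : SurjOn W (Iio ω₁) univ) :
    MadFamily (luzinSeq W '' Iio ω₁) := by
  refine ⟨almostDisjoint_image_luzinSeq W, fun X hX => ?_⟩
  by_contra! h
  obtain ⟨γ, hγ, htail⟩ :=
    exists_forall_le_infinite_inter_luzinSeq hW (notAlmostCovered_of_forall_finite_inter hX h)
  exact htail γ hγ le_rfl (h _ (mem_image_of_mem _ hγ))

theorem finite_or_countable_compl_setOf_infinite_inter (hW : SurjOn W (Iio ω₁) univ)
    (V : Set ℕ) : {a : luzinSeq W '' Iio ω₁ | (a.1 ∩ V).Infinite}.Finite ∨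
      {a : luzinSeq W '' Iio ω₁ | (a.1 ∩ V).Infinite}ᶜ.Countable := by
  by_cases hV : NotAlmostCovered (luzinSeq W '' Iio ω₁) V
  · obtain ⟨γ, hγ, htail⟩ := exists_forall_le_infinite_inter_luzinSeq hW hV
    refine .inr (((countable_Iio_of_lt_omega_one hγ).image (luzinSeq W)).preimage
      Subtype.val_injective |>.mono ?_)
    rintro ⟨_, α, hα, rfl⟩ hfin
    exact ⟨α, not_le.1 fun h => hfin (htail α hα h), rfl⟩
  · simp only [NotAlmostCovered, not_forall, not_infinite] at hV
    obtain ⟨s, hs, hfin⟩ := hV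
    refine .inl ((s.finite_toSet.preimage Subtype.val_injective.injOn).subset fun a ha => ?_)
    by_contra has
    exact ha (finite_inter_of_finite_diff_sUnion (finite_inter_of_mem_image_luzinSeq W) hs hfin
      a.2 has)

end LuzinSeq

theorem SepOpen.symm {X : Type*} [TopologicalSpace X] {A B : Set X} (h : SepOpen A B) :
    SepOpen B A :=
  let ⟨U, V, hU, hV, hAU, hBV, hUV⟩ := h
  ⟨V, U, hV, hU, hBV, hAU, hUV.symm⟩

namespace Psi

variable {𝒜 : Set (Set ℕ)}

def ofTraces (N : Set ℕ) (𝒞 : Set 𝒜) : Set (Psi 𝒜) := {x | Sum.elim (· ∈ N) (· ∈ 𝒞) x}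

theorem isOpen_ofTraces_iff {N : Set ℕ} {𝒞 : Set 𝒜} :
    IsOpen (ofTraces N 𝒞) ↔ ∀ a ∈ 𝒞, (a.1 \ N).Finite :=
  Iff.rfl

theorem pt_mem_closure_iff {U : Set (Psi 𝒜)} {a : 𝒜} :
    Psi.pt a ∈ closure U ↔ Psi.pt a ∈ U ∨ (a.1 ∩ Psi.nat ⁻¹' U).Infinite := by
  rw [mem_closure_iff]
  constructor
  · intro h
    by_contra! hcon
    obtain ⟨haU, hfin⟩ := hcon
    have hO : IsOpen (ofTraces (a.1 \ Psi.nat ⁻¹' U) {a}) := by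
      refine isOpen_ofTraces_iff.2 ?_
      rintro b rfl
      simpa only [sdiff_sdiff_right_self, inf_eq_inter] using hfin
    obtain ⟨x, hxO, hxU⟩ := h _ hO rfl
    rcases x with n | b
    · exact hxO.2 hxU
    · exact haU (hxO ▸ hxU)
  · rintro (h | h) O hO haO
    · exact ⟨_, haO, h⟩
    · obtain ⟨n, ⟨hna, hnU⟩, hnO⟩ := (h.sdiff (hO a haO)).nonempty
      exact ⟨Psi.nat n, not_not.1 fun h => hnO ⟨hna, h⟩, hnU⟩

theorem pt_mem_of_isClosed {C : Set (Psi 𝒜)} (hC : IsClosed C) {a : 𝒜}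
    (h : (a.1 ∩ Psi.nat ⁻¹' C).Infinite) : Psi.pt a ∈ C :=
  hC.closure_eq ▸ pt_mem_closure_iff.2 (.inr h)

theorem finite_inter_preimage_nat_of_isClosed {C : Set (Psi 𝒜)} (hC : IsClosed C) {a : 𝒜}
    (h : Psi.pt a ∉ C) : (a.1 ∩ Psi.nat ⁻¹' C).Finite :=
  not_infinite.1 (mt (pt_mem_of_isClosed hC) h)

theorem infinite_inter_preimage_nat_of_isOpen {O : Set (Psi 𝒜)} (hO : IsOpen O) {a : 𝒜}
    (ha : a.1.Infinite) (h : Psi.pt a ∈ O) : (a.1 ∩ Psi.nat ⁻¹' O).Infinite :=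
  (ha.sdiff (hO a h)).mono fun _ hn => ⟨hn.1, not_not.1 fun h' => hn.2 ⟨hn.1, h'⟩⟩

theorem pt_mem_iff_of_regClosed {C : Set (Psi 𝒜)} (hC : RegClosed C) {a : 𝒜}
    (ha : a.1.Infinite) : Psi.pt a ∈ C ↔ (a.1 ∩ Psi.nat ⁻¹' C).Infinite := by
  refine ⟨fun h => ?_, pt_mem_of_isClosed (hC ▸ isClosed_closure)⟩
  rw [← hC, pt_mem_closure_iff] at h
  refine (h.elim (infinite_inter_preimage_nat_of_isOpen isOpen_interior ha) id).mono ?_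
  exact inter_subset_inter_right _ (preimage_mono interior_subset)

theorem sepOpen_of_finite_preimage_pt (had : ∀ a ∈ 𝒜, ∀ b ∈ 𝒜, a ≠ b → (a ∩ b).Finite)
    {P Q : Set (Psi 𝒜)} (hP : IsClosed P) (hQ : IsClosed Q) (hPQ : Disjoint P Q)
    (hfin : (Psi.pt ⁻¹' Q).Finite) : SepOpen P Q := by
  -- `Xᶜ` is the trace of `Q` plus the points outside `P` of the finitely many `b ∈ Q`: every
  -- `a ∈ P` meets it finitely, and every `b ∈ Q` meets `X` only inside the trace of `P`.
  let X : Set ℕ := {n | Psi.nat n ∉ Q ∧ ∀ b : 𝒜, Psi.pt b ∈ Q → n ∈ b.1 → Psi.nat n ∈ P}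
  refine ⟨ofTraces X (Psi.pt ⁻¹' P), ofTraces Xᶜ (Psi.pt ⁻¹' Q),
    isOpen_ofTraces_iff.2 fun a ha => ?_, isOpen_ofTraces_iff.2 fun b hb => ?_, ?_, ?_, ?_⟩
  · refine ((finite_inter_preimage_nat_of_isClosed hQ (hPQ.notMem_of_mem_left ha)).union
      (hfin.biUnion fun b hb => had _ a.2 _ b.2 ?_)).subset ?_
    · exact fun h => hPQ.ne_of_mem ha hb (congrArg Psi.pt (Subtype.ext h))
    · rintro n ⟨hna, hnX⟩
      simp only [X, mem_ofPred_eq, not_and, not_forall] at hnX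
      by_cases hnQ : Psi.nat n ∈ Q
      · exact .inl ⟨hna, hnQ⟩
      · obtain ⟨b, hb, hnb, -⟩ := hnX hnQ
        exact .inr (mem_biUnion hb ⟨hna, hnb⟩)
  · exact (finite_inter_preimage_nat_of_isClosed hP (hPQ.notMem_of_mem_right hb)).subset
      fun n hn => ⟨hn.1, (not_not.1 hn.2).2 b hb hn.1⟩
  · rintro (n | a) hx
    exacts [⟨fun hnQ => hPQ.ne_of_mem hx hnQ rfl, fun _ _ _ => hx⟩, hx]
  · rintro (n | b) hx
    exacts [fun hnX => hnX.1 hx, hx]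
  · rw [disjoint_left]
    rintro (n | a) hU hV
    exacts [hV hU, hPQ.ne_of_mem hU hV rfl]

end Psi

theorem quasiNormal_psi_of_finite_or_countable_compl {𝒜 : Set (Set ℕ)}
    (hinf : ∀ a ∈ 𝒜, a.Infinite) (had : ∀ a ∈ 𝒜, ∀ b ∈ 𝒜, a ≠ b → (a ∩ b).Finite)
    (hunc : ¬ 𝒜.Countable)
    (hdich : ∀ V : Set ℕ, {a : 𝒜 | (a.1 ∩ V).Infinite}.Finite ∨
      {a : 𝒜 | (a.1 ∩ V).Infinite}ᶜ.Countable) :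
    QuasiNormal (Psi 𝒜) := by
  have hpi : ∀ {P : Set (Psi 𝒜)}, PiClosed P →
      IsClosed P ∧ ((Psi.pt ⁻¹' P).Finite ∨ (Psi.pt ⁻¹' P)ᶜ.Countable) := by
    rintro _ ⟨S, hS, rfl⟩
    refine ⟨isClosed_sInter fun C hC => hS C hC ▸ isClosed_closure, ?_⟩
    rw [preimage_sInter]
    refine finite_or_countable_compl_biInter S.finite_toSet fun C hC => ?_
    have hC : Psi.pt ⁻¹' C = {a : 𝒜 | (a.1 ∩ Psi.nat ⁻¹' C).Infinite} :=
      ext fun a => Psi.pt_mem_iff_of_regClosed (hS C hC) (hinf a.1 a.2)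
    exact hC ▸ hdich _
  intro P Q hP hQ hPQ
  obtain ⟨hQc, hQ | hQ⟩ := hpi hQ
  · exact Psi.sepOpen_of_finite_preimage_pt had (hpi hP).1 hQc hPQ hQ
  obtain ⟨hPc, hP | hP⟩ := hpi hP
  · exact (Psi.sepOpen_of_finite_preimage_pt had hQc hPc hPQ.symm hP).symm
  refine absurd (countable_coe_iff.1 (countable_univ_iff.1 ((hP.union hQ).mono ?_))) hunc
  exact fun a _ => not_and_or.1 fun h => hPQ.ne_of_mem h.1 h.2 rfl

/-- under CH there is a Luzin mad family 𝒜 with Ψ(𝒜) quasi-normal. -/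
theorem CH_luzin_mad_quasiNormal (hCH : Cardinal.continuum = Cardinal.aleph 1) :
    ∃ 𝒜, MadFamily 𝒜 ∧ LuzinFamily 𝒜 ∧ QuasiNormal (Psi 𝒜) := by
  obtain ⟨W, hW⟩ := exists_surjOn_Iio_omega_one hCH
  have had := almostDisjoint_image_luzinSeq W
  exact ⟨_, madFamily_image_luzinSeq hW, luzinFamily_image_luzinSeq W,
    quasiNormal_psi_of_finite_or_countable_compl had.2.1 had.2.2 (not_countable_image_luzinSeq W)
      (finite_or_countable_compl_setOf_infinite_inter hW)⟩

end PsiSpace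
end

section
/- If 𝒜 is an almost disjoint family such that Ψ(𝒜) is almost-normal, then 𝒜 is strongly ℵ₀-separated. -/
open Set

namespace PsiSpace

/-!
Enumerate `A = {f n}` and `B = {g n}`. The set `W = ⋃ n, f n \ ⋃ i ≤ n, g i` almost contains every
member of `A` and is almost disjoint from every member of `B`. In `Ψ(𝒜)` the points `a` with `a ∩ W`
finite form a closed set disjoint from the regular closed set `closure W`; if disjoint open sets
`U` and `V ⊇ closure W` separate them, then `X = V ∩ ℕ` splits `𝒜` along `W`.
-/

lemma exists_diff_finite_inter_finite_of_seq {α : Type*} (f g : ℕ → Set α)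
    (hfg : ∀ n i, (f n ∩ g i).Finite) :
    ∃ W : Set α, (∀ n, (f n \ W).Finite) ∧ ∀ i, (g i ∩ W).Finite := by
  refine ⟨⋃ n, f n \ ⋃ i ∈ Iic n, g i, fun n => ?_, fun k => ?_⟩
  · refine ((finite_Iic n).biUnion fun i _ => hfg n i).subset ?_
    rintro x ⟨hxf, hxW⟩
    by_contra hx
    exact hxW (mem_iUnion.2 ⟨n, hxf, fun hxg => hx (by simpa [hxf] using hxg)⟩)
  · refine ((finite_Iio k).biUnion fun n _ => hfg n k).subset ?_
    rintro x ⟨hxg, hxW⟩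
    obtain ⟨n, hxf, hxG⟩ := mem_iUnion.1 hxW
    have hnk : n < k := by
      by_contra! hkn
      exact hxG (mem_biUnion (mem_Iic.2 hkn) hxg)
    exact mem_biUnion (mem_Iio.2 hnk) ⟨hxf, hxg⟩

lemma exists_diff_finite_inter_finite {α : Type*} {A B : Set (Set α)} (hA : A.Countable)
    (hB : B.Countable) (hAB : ∀ a ∈ A, ∀ b ∈ B, (a ∩ b).Finite) :
    ∃ W : Set α, (∀ a ∈ A, (a \ W).Finite) ∧ ∀ b ∈ B, (b ∩ W).Finite := by
  -- adding `∅` makes both families nonempty, so that they can be enumerated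
  obtain ⟨f, hf⟩ := (hA.insert ∅).exists_eq_range (insert_nonempty _ _)
  obtain ⟨g, hg⟩ := (hB.insert ∅).exists_eq_range (insert_nonempty _ _)
  have hfg : ∀ n i, (f n ∩ g i).Finite := by
    intro n i
    have hfn : f n ∈ insert ∅ A := hf ▸ mem_range_self n
    have hgi : g i ∈ insert ∅ B := hg ▸ mem_range_self i
    rcases hfn with hfn | hfn
    · simp [hfn]
    rcases hgi with hgi | hgi
    · simp [hgi]
    exact hAB _ hfn _ hgi
  obtain ⟨W, hfW, hgW⟩ := exists_diff_finite_inter_finite_of_seq f g hfg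
  refine ⟨W, fun a ha => ?_, fun b hb => ?_⟩
  · obtain ⟨n, rfl⟩ : a ∈ range f := hf ▸ mem_insert_of_mem ∅ ha
    exact hfW n
  · obtain ⟨i, rfl⟩ : b ∈ range g := hg ▸ mem_insert_of_mem ∅ hb
    exact hgW i

lemma IsOpen.regClosed_closure {X : Type*} [TopologicalSpace X] {U : Set X} (hU : IsOpen U) :
    RegClosed (closure U) := by
  rw [RegClosed, ← hU.interior_eq]
  exact closure_interior_idem

section Psi

variable {𝒜 : Set (Set ℕ)}

lemma isOpen_iff (U : Set (Psi 𝒜)) :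
    IsOpen U ↔ ∀ a : {a : Set ℕ // a ∈ 𝒜}, Psi.pt a ∈ U →
      {n : ℕ | n ∈ a.1 ∧ Psi.nat n ∉ U}.Finite := Iff.rfl

lemma diff_preimage_nat_finite {U : Set (Psi 𝒜)} (hU : IsOpen U) {a : {a : Set ℕ // a ∈ 𝒜}}
    (ha : Psi.pt a ∈ U) : (a.1 \ Psi.nat ⁻¹' U).Finite :=
  (isOpen_iff U).1 hU a ha

lemma isOpen_psiNat (W : Set ℕ) : IsOpen (PsiNat 𝒜 W) := by
  rintro a ⟨n, -, hn⟩
  exact absurd hn Sum.inr_ne_inl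

lemma isClosed_psiSub (𝒞 : Set (Set ℕ)) : IsClosed (PsiSub 𝒜 𝒞) := by
  rw [← isOpen_compl_iff, isOpen_iff]
  intro a _
  refine finite_empty.subset ?_
  rintro n ⟨-, hn⟩
  obtain ⟨b, -, hb⟩ := not_not.1 hn
  exact Sum.inl_ne_inr hb

lemma pt_mem_closure_psiNat_iff (W : Set ℕ) (c : {a : Set ℕ // a ∈ 𝒜}) :
    Psi.pt c ∈ closure (PsiNat 𝒜 W) ↔ (c.1 ∩ W).Infinite := by
  constructor
  · intro hc hfin
    have hO : IsOpen (insert (Psi.pt c) (PsiNat 𝒜 (c.1 \ W))) := by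
      rintro a (ha | ⟨n, -, hn⟩)
      · obtain rfl : a = c := Sum.inr_injective ha
        refine hfin.subset fun n ⟨hna, hnO⟩ => ⟨hna, not_not.1 fun hnW => hnO ?_⟩
        exact mem_insert_of_mem _ ⟨n, ⟨hna, hnW⟩, rfl⟩
      · exact absurd hn Sum.inr_ne_inl
    obtain ⟨x, hxO, n, hnW, rfl⟩ := mem_closure_iff.1 hc _ hO (mem_insert _ _)
    rcases hxO with hx | ⟨m, hm, hmn⟩
    · exact Sum.inl_ne_inr hx
    · obtain rfl : n = m := Sum.inl_injective hmn
      exact hm.2 hnW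
  · intro hinf
    refine mem_closure_iff.2 fun O hO hcO => ?_
    obtain ⟨n, hnW, hnO⟩ := (hinf.sdiff (diff_preimage_nat_finite hO hcO)).nonempty
    exact ⟨Psi.nat n, not_not.1 fun h => hnO ⟨hnW.1, h⟩, n, hnW.2, rfl⟩

lemma AlmostNormal.exists_split (h : AlmostNormal (Psi 𝒜)) (W : Set ℕ) :
    ∃ X : Set ℕ, ∀ a ∈ 𝒜, ((a ∩ W).Infinite → (a \ X).Finite) ∧
      ((a ∩ W).Finite → (a ∩ X).Finite) := by
  have hFR : Disjoint (PsiSub 𝒜 {a | (a ∩ W).Finite}) (closure (PsiNat 𝒜 W)) := by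
    rw [disjoint_left]
    rintro x ⟨c, hc, rfl⟩ hxR
    exact (pt_mem_closure_psiNat_iff W c).1 hxR hc
  obtain ⟨U, V, hU, hV, hFU, hRV, hUV⟩ :=
    h _ _ (isClosed_psiSub _) (IsOpen.regClosed_closure (isOpen_psiNat W)) hFR
  refine ⟨Psi.nat ⁻¹' V, fun a ha => ⟨fun hinf => ?_, fun hfin => ?_⟩⟩
  · exact diff_preimage_nat_finite hV (hRV ((pt_mem_closure_psiNat_iff W ⟨a, ha⟩).2 hinf))
  · refine (diff_preimage_nat_finite hU (hFU ⟨⟨a, ha⟩, hfin, rfl⟩)).subset ?_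
    exact fun n ⟨hna, hnV⟩ => ⟨hna, fun hnU => disjoint_left.1 hUV hnU hnV⟩

end Psi

/-- if Ψ(𝒜) is almost-normal then 𝒜 is strongly ℵ₀-separated. -/
theorem almostNormal_stronglySeparated (𝒜 : Set (Set ℕ)) (had : AlmostDisjoint 𝒜)
    (h : AlmostNormal (Psi 𝒜)) : StronglyAleph0Separated 𝒜 := by
  intro A B hA hB hAc _ hBc _ hAB
  obtain ⟨W, hAW, hBW⟩ := exists_diff_finite_inter_finite hAc hBc fun a ha b hb =>
    had.2.2 a (hA ha) b (hB hb) fun hab => disjoint_left.1 hAB ha (hab ▸ hb)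
  obtain ⟨X, hX⟩ := h.exists_split W
  refine ⟨X, fun a ha => ?_, fun a ha => ?_, fun b hb => (hX b (hB hb)).2 (hBW b hb)⟩
  · by_cases hfin : (a ∩ W).Finite
    · exact Or.inr ((hX a ha).2 hfin)
    · exact Or.inl ((hX a ha).1 hfin)
  · by_cases hfin : (a ∩ W).Finite
    · have ha_fin : a.Finite := inter_union_sdiff a W ▸ hfin.union (hAW a ha)
      exact ha_fin.subset sdiff_subset
    · exact (hX a (hA ha)).1 hfin

end PsiSpace
end
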